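/- The symmetric minimum ⊼, defined by a ⊼ b = -(|a| ∧ |b|) if sign a ≠ sign b and a ⊼ b = |a| ∧ |b| otherwise, is commutative and associative on L. -/
import Mathlib


variable {L : Type*}

/-- Absolute value on a symmetric linearly ordered set with reflection `neg`. -/
def sabs [LinearOrder L] (neg : L → L) (a : L) : L := a ⊔ neg a

/-- The symmetric maximum. -/
def symmax [LinearOrder L] (neg : L → L) (zero : L) (a b : L) : L :=
  if b = neg a then zero
  else if sabs neg a ⊔ sabs neg b = neg a ∨ sabs neg a ⊔ sabs neg b = neg b then
    neg (sabs neg a ⊔ sabs neg b)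
  else sabs neg a ⊔ sabs neg b

/-- The sign function, valued in {-1, 0, 1}. -/
def sgn [LinearOrder L] (zero a : L) : ℤ :=
  if a < zero then -1 else if a = zero then 0 else 1

/-- The symmetric minimum. -/
def symmin [LinearOrder L] (neg : L → L) (zero : L) (a b : L) : L :=
  if sgn zero a ≠ sgn zero b then neg (sabs neg a ⊓ sabs neg b)
  else sabs neg a ⊓ sabs neg b

section Aux
set_option linter.unusedSectionVars false
variable [LinearOrder L] (neg : L → L) (zero : L)
    (hinv : ∀ a, neg (neg a) = a)
    (hanti : ∀ a b, a ≤ b → neg b ≤ neg a)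
    (hzero : neg zero = zero)

include hinv hanti hzero

lemma sgn_neg_one_iff' {x : L} : sgn zero x = -1 ↔ x < zero := by
  unfold sgn; split_ifs with h1 h2 <;> simp_all

lemma sgn_zero_iff' {x : L} : sgn zero x = 0 ↔ x = zero := by
  unfold sgn; split_ifs with h1 h2 <;> simp_all
  exact h1.ne

lemma neg_lt' {a b : L} (h : a < b) : neg b < neg a := by
  rcases lt_or_eq_of_le (hanti a b h.le) with h' | h'
  · exact h'
  · exact absurd (by rw [← hinv a, ← hinv b, h']) h.ne'

lemma sabs_nonneg' (a : L) : zero ≤ sabs neg a := by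
  rcases le_total zero a with h | h
  · exact h.trans le_sup_left
  · exact (le_of_eq hzero.symm).trans ((hanti a zero h).trans le_sup_right)

lemma sabs_of_nonneg' {a : L} (h : zero ≤ a) : sabs neg a = a :=
  sup_eq_left.2 (((hanti zero a h).trans hzero.le).trans h)

lemma sabs_of_nonpos' {a : L} (h : a ≤ zero) : sabs neg a = neg a :=
  sup_eq_right.2 (h.trans (hzero.symm.le.trans (hanti a zero h)))

lemma sabs_eq_zero' {a : L} : sabs neg a = zero ↔ a = zero := by
  constructor
  · intro h
    have h1 : a ≤ zero := le_sup_left.trans h.le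
    have h2 : neg a ≤ zero := le_sup_right.trans h.le
    have := hanti (neg a) zero h2
    rw [hinv, hzero] at this
    exact le_antisymm h1 this
  · rintro rfl; simp [sabs, hzero]

lemma sabs_pos' {a : L} (h : a ≠ zero) : zero < sabs neg a :=
  lt_of_le_of_ne (sabs_nonneg' neg zero hinv hanti hzero a)
    (fun h' => h ((sabs_eq_zero' neg zero hinv hanti hzero).1 h'.symm))

lemma sgn_ext' {x y : L} (hs : sgn zero x = sgn zero y) (ha : sabs neg x = sabs neg y) :
    x = y := by
  rcases lt_trichotomy x zero with h | h | h
  · have hy : y < zero := (sgn_neg_one_iff' neg zero hinv hanti hzero).1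
      (hs ▸ (sgn_neg_one_iff' neg zero hinv hanti hzero).2 h)
    rw [sabs_of_nonpos' neg zero hinv hanti hzero h.le,
      sabs_of_nonpos' neg zero hinv hanti hzero hy.le] at ha
    rw [← hinv x, ha, hinv]
  · have hy : y = zero := (sgn_zero_iff' neg zero hinv hanti hzero).1
      (hs ▸ (sgn_zero_iff' neg zero hinv hanti hzero).2 h)
    rw [h, hy]
  · have hx' : ¬ x < zero := not_lt.2 h.le
    have hy : ¬ y < zero ∧ y ≠ zero := by
      constructor
      · intro hl
        rw [(sgn_neg_one_iff' neg zero hinv hanti hzero).2 hl] at hs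
        rw [sgn, if_neg hx', if_neg h.ne'] at hs; omega
      · intro hl
        rw [(sgn_zero_iff' neg zero hinv hanti hzero).2 hl] at hs
        rw [sgn, if_neg hx', if_neg h.ne'] at hs; omega
    have hy' : zero ≤ y := not_lt.1 hy.1
    rwa [sabs_of_nonneg' neg zero hinv hanti hzero h.le,
      sabs_of_nonneg' neg zero hinv hanti hzero hy'] at ha

lemma sabs_symmin' (a b : L) :
    sabs neg (symmin neg zero a b) = sabs neg a ⊓ sabs neg b := by
  have hm : zero ≤ sabs neg a ⊓ sabs neg b :=
    le_inf (sabs_nonneg' neg zero hinv hanti hzero a) (sabs_nonneg' neg zero hinv hanti hzero b)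
  unfold symmin
  split
  · rw [sabs_of_nonpos' neg zero hinv hanti hzero ((hanti _ _ hm).trans hzero.le), hinv]
  · exact sabs_of_nonneg' neg zero hinv hanti hzero hm

lemma symmin_of_zero_left' {a b : L} (ha : a = zero) : symmin neg zero a b = zero := by
  have hm : sabs neg a ⊓ sabs neg b = zero := by
    rw [(sabs_eq_zero' neg zero hinv hanti hzero).2 ha]
    exact inf_eq_left.2 (sabs_nonneg' neg zero hinv hanti hzero b)
  unfold symmin; rw [hm]; split <;> simp [hzero]

lemma symmin_of_zero_right' {a b : L} (hb : b = zero) : symmin neg zero a b = zero := by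
  have hm : sabs neg a ⊓ sabs neg b = zero := by
    rw [(sabs_eq_zero' neg zero hinv hanti hzero).2 hb]
    exact inf_eq_right.2 (sabs_nonneg' neg zero hinv hanti hzero a)
  unfold symmin; rw [hm]; split <;> simp [hzero]

lemma sgn_symmin' (a b : L) :
    sgn zero (symmin neg zero a b) = sgn zero a * sgn zero b := by
  by_cases ha : a = zero
  · rw [symmin_of_zero_left' neg zero hinv hanti hzero ha,
      (sgn_zero_iff' neg zero hinv hanti hzero).2 rfl,
      (sgn_zero_iff' neg zero hinv hanti hzero).2 ha, zero_mul]
  by_cases hb : b = zero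
  · rw [symmin_of_zero_right' neg zero hinv hanti hzero hb,
      (sgn_zero_iff' neg zero hinv hanti hzero).2 rfl,
      (sgn_zero_iff' neg zero hinv hanti hzero).2 hb, mul_zero]
  have hm : zero < sabs neg a ⊓ sabs neg b :=
    lt_inf_iff.2 ⟨sabs_pos' neg zero hinv hanti hzero ha, sabs_pos' neg zero hinv hanti hzero hb⟩
  have hsa : sgn zero a = -1 ∨ sgn zero a = 1 := by
    unfold sgn; split_ifs with h1 <;> simp_all
  have hsb : sgn zero b = -1 ∨ sgn zero b = 1 := by
    unfold sgn; split_ifs with h1 <;> simp_all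
  unfold symmin
  split
  · next h =>
    have hlt : neg (sabs neg a ⊓ sabs neg b) < zero :=
      hzero ▸ neg_lt' neg zero hinv hanti hzero hm
    rw [sgn, if_pos hlt]
    rcases hsa with h1 | h1 <;> rcases hsb with h2 | h2 <;>
      rw [h1, h2] at h ⊢ <;> simp_all
  · next h =>
    rw [sgn, if_neg (not_lt.2 hm.le), if_neg hm.ne']
    push_neg at h
    rcases hsa with h1 | h1 <;> rcases hsb with h2 | h2 <;>
      rw [h1, h2] at h ⊢ <;> simp_all

end Aux

/-- the symmetric minimum is commutative and associative. -/
theorem symmin_comm_assoc [LinearOrder L] (neg : L → L) (zero : L)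
    (hinv : ∀ a, neg (neg a) = a)
    (hanti : ∀ a b, a ≤ b → neg b ≤ neg a)
    (hzero : neg zero = zero) :
    (∀ a b : L, symmin neg zero a b = symmin neg zero b a) ∧
      (∀ a b c : L,
        symmin neg zero (symmin neg zero a b) c = symmin neg zero a (symmin neg zero b c)) := by

  constructor
  · intro a b
    unfold symmin
    rw [inf_comm (sabs neg a)]
    exact if_congr ne_comm rfl rfl
  · intro a b c
    apply sgn_ext' neg zero hinv hanti hzero
    · rw [sgn_symmin' neg zero hinv hanti hzero, sgn_symmin' neg zero hinv hanti hzero,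
        sgn_symmin' neg zero hinv hanti hzero, sgn_symmin' neg zero hinv hanti hzero, mul_assoc]
    · rw [sabs_symmin' neg zero hinv hanti hzero, sabs_symmin' neg zero hinv hanti hzero,
        sabs_symmin' neg zero hinv hanti hzero, sabs_symmin' neg zero hinv hanti hzero, inf_assoc]
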